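/- For a partition α = (α_1, ..., α_n), the Schur polynomial in n variables satisfies the bialternant formula: s_α(x_1,...,x_n) · det(x_j^{n-i})_{i,j=1}^n = det(x_j^{α_i + n - i})_{i,j=1}^n. -/

import Mathlib

/-!
With `H(t) = ∑ₘ hₘ tᵐ = ∏ᵢ (1 - xᵢ t)⁻¹` and `Eⱼ(t) = ∏_{i ≠ j} (1 - xᵢ t)`, a polynomial of
degree `< n`, one has `Eⱼ(t) H(t) = (1 - xⱼ t)⁻¹`. Comparing coefficients of `t^c` gives
`∑ₖ h_{c-k} [tᵏ]Eⱼ = xⱼ^c`, i.e. the matrix identity `(h_{βᵢ-k})ᵢₖ ([tᵏ]Eⱼ)ₖⱼ = (xⱼ^{βᵢ})ᵢⱼ`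
for every exponent vector `β`. For `β = α + δ` the first factor is the Jacobi–Trudi matrix
with its columns reversed; taking determinants for `α` and for `α = 0` (where `s₀ = 1`) and
comparing yields the bialternant formula.
-/

open MvPolynomial

/-- Complete homogeneous symmetric polynomial in `n` variables, indexed by an
integer, with the convention `h_k = 0` for `k < 0` and `h_0 = 1`. -/
noncomputable def hInt (n : ℕ) (k : ℤ) : MvPolynomial (Fin n) ℤ :=
  if 0 ≤ k then hsymm (Fin n) ℤ k.toNat else 0

/-- The Schur polynomial of `α` in `n` variables, defined via the
Jacobi–Trudi determinant `s_α = det (h_{α_i - i + j})_{i,j}`. -/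
noncomputable def schur (n : ℕ) (α : Fin n → ℕ) : MvPolynomial (Fin n) ℤ :=
  Matrix.det (Matrix.of fun i j : Fin n => hInt n ((α i : ℤ) - (i : ℕ) + (j : ℕ)))

/-- A symmetric polynomial is Schur positive if it is a nonnegative integer
combination of Schur polynomials of partitions. -/
def SchurPositive (n : ℕ) (f : MvPolynomial (Fin n) ℤ) : Prop :=
  ∃ c : (Fin n → ℕ) →₀ ℕ, (∀ lam ∈ c.support, Antitone lam) ∧
    f = c.sum fun lam k => (k : ℤ) • schur n lam

open Finset

namespace PowerSeries

variable {R : Type*} [CommRing R]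

theorem rescale_mk_one_mul_one_sub_C_mul_X (a : R) :
    rescale a (mk 1) * (1 - C a * PowerSeries.X) = 1 := by
  simpa [rescale_X] using congrArg (rescale a) (mk_one_mul_one_sub_eq_one (S := R))

theorem coeff_prod_one_sub_C_mul_X_of_card_lt {ι : Type*} (s : Finset ι) (a : ι → R) {k : ℕ}
    (hk : #s < k) : coeff k (∏ i ∈ s, (1 - C (a i) * PowerSeries.X)) = 0 := by
  classical
  induction s using Finset.induction_on generalizing k with
  | empty => rw [prod_empty, coeff_one, if_neg (by simp at hk; omega)]
  | @insert b s hb ih =>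
    rw [card_insert_of_notMem hb] at hk
    obtain ⟨k, rfl⟩ := Nat.exists_eq_add_one_of_ne_zero (by omega : k ≠ 0)
    rw [prod_insert hb, sub_mul, one_mul, mul_assoc, map_sub, coeff_C_mul, coeff_succ_X_mul,
      ih (by omega), ih (by omega), mul_zero, sub_zero]

end PowerSeries

namespace MvPolynomial

open PowerSeries (rescale mk coeff_mk coeff_rescale coeff_prod)

variable (σ R : Type*) [CommRing R] [Fintype σ] [DecidableEq σ]

noncomputable def hsymmSeries : PowerSeries (MvPolynomial σ R) :=
  mk fun m => hsymm σ R m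

/-- `∑ₖ (-1)ᵏ eₖ(xᵢ : i ≠ j) tᵏ`. -/
noncomputable def esymmEraseSeries (j : σ) : PowerSeries (MvPolynomial σ R) :=
  ∏ i ∈ univ.erase j, (1 - PowerSeries.C (X i) * PowerSeries.X)

@[simp]
theorem coeff_hsymmSeries (m : ℕ) : PowerSeries.coeff m (hsymmSeries σ R) = hsymm σ R m :=
  coeff_mk _ _

theorem hsymmSeries_eq_prod : hsymmSeries σ R = ∏ i, rescale (X i) (mk 1) := by
  refine PowerSeries.ext fun m => ?_
  rw [coeff_hsymmSeries, coeff_prod, hsymm]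
  simp only [coeff_rescale, coeff_mk, Pi.one_apply, mul_one]
  refine sum_bij' (fun s _ => Multiset.toFinsupp s.1)
    (fun l hl => ⟨Finsupp.toMultiset l, ?_⟩) ?_ (fun _ _ => mem_univ _) ?_ ?_ ?_
  · rw [mem_finsuppAntidiag] at hl
    simp [← hl.1, Finsupp.sum_fintype]
  · intro s _
    rw [mem_finsuppAntidiag]
    exact ⟨(Multiset.sum_count_eq_card fun i _ => mem_univ i).trans s.2, subset_univ _⟩
  · intro s _
    exact Sym.coe_injective (Multiset.toFinsupp_toMultiset _)
  · simp
  · intro s _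
    rw [prod_multiset_map_count]
    refine prod_subset (subset_univ _) fun i _ hi => ?_
    rw [Multiset.mem_toFinset, ← Multiset.count_eq_zero] at hi
    rw [hi, pow_zero]

variable {σ R}

theorem coeff_esymmEraseSeries_of_card_le (j : σ) {k : ℕ} (hk : Fintype.card σ ≤ k) :
    PowerSeries.coeff k (esymmEraseSeries σ R j) = 0 := by
  refine PowerSeries.coeff_prod_one_sub_C_mul_X_of_card_lt _ _ ?_
  rw [card_erase_of_mem (mem_univ j), card_univ]
  have := Fintype.card_pos_iff.mpr ⟨j⟩
  omega

theorem esymmEraseSeries_mul_hsymmSeries (j : σ) :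
    esymmEraseSeries σ R j * hsymmSeries σ R = rescale (X j) (mk 1) := by
  rw [hsymmSeries_eq_prod, ← mul_prod_erase _ _ (mem_univ j), esymmEraseSeries, mul_left_comm,
    ← prod_mul_distrib, prod_eq_one fun i _ => by
      rw [mul_comm, PowerSeries.rescale_mk_one_mul_one_sub_C_mul_X], mul_one]

theorem sum_range_coeff_esymmEraseSeries_mul_hsymm (j : σ) (c : ℕ) :
    ∑ k ∈ range (c + 1), PowerSeries.coeff k (esymmEraseSeries σ R j) * hsymm σ R (c - k) =
      X j ^ c := by
  have := congrArg (PowerSeries.coeff c) (esymmEraseSeries_mul_hsymmSeries (R := R) j)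
  rw [PowerSeries.coeff_mul, Nat.sum_antidiagonal_eq_sum_range_succ_mk, coeff_rescale, coeff_mk,
    Pi.one_apply, mul_one] at this
  simpa only [coeff_hsymmSeries] using this

end MvPolynomial

theorem hInt_natCast (n m : ℕ) : hInt n m = hsymm (Fin n) ℤ m := by
  rw [hInt, if_pos (Int.natCast_nonneg m), Int.toNat_natCast]

theorem hInt_of_neg {n : ℕ} {k : ℤ} (hk : k < 0) : hInt n k = 0 :=
  if_neg (not_le.mpr hk)

theorem sum_hInt_mul_coeff_esymmEraseSeries (n c : ℕ) (j : Fin n) :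
    ∑ k : Fin n, hInt n (c - (k : ℕ)) * PowerSeries.coeff k (esymmEraseSeries (Fin n) ℤ j) =
      X j ^ c := by
  set g : ℕ → MvPolynomial (Fin n) ℤ :=
    fun k => hInt n (c - k) * PowerSeries.coeff k (esymmEraseSeries _ _ j)
  have hg : ∀ k ≥ min n (c + 1), g k = 0 := fun k hk => by
    rcases min_le_iff.mp hk with hk | hk
    · simp only [g, coeff_esymmEraseSeries_of_card_le j (by simpa using hk), mul_zero]
    · simp only [g, hInt_of_neg (by omega : (c : ℤ) - k < 0), zero_mul]
  calc ∑ k : Fin n, g k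
      = ∑ k ∈ range (c + 1), g k := by
        rw [Fin.sum_univ_eq_sum_range g, eventually_constant_sum hg (min_le_left _ _),
          eventually_constant_sum hg (min_le_right _ _)]
    _ = ∑ k ∈ range (c + 1),
          PowerSeries.coeff k (esymmEraseSeries _ _ j) * hsymm (Fin n) ℤ (c - k) := by
        refine sum_congr rfl fun k hk => ?_
        rw [mul_comm, ← hInt_natCast, Nat.cast_sub (by simpa [Nat.lt_succ_iff] using hk)]
    _ = X j ^ c := sum_range_coeff_esymmEraseSeries_mul_hsymm j c

theorem det_hInt_mul_det_coeff_esymmEraseSeries (n : ℕ) (β : Fin n → ℕ) :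
    (Matrix.of fun i k : Fin n => hInt n (β i - (k : ℕ))).det *
      (Matrix.of fun k j : Fin n => PowerSeries.coeff k (esymmEraseSeries (Fin n) ℤ j)).det =
    (Matrix.of fun i j : Fin n => (X j : MvPolynomial (Fin n) ℤ) ^ β i).det := by
  rw [← Matrix.det_mul]
  congr 1
  exact Matrix.ext fun i j => sum_hInt_mul_coeff_esymmEraseSeries n (β i) j

theorem det_hInt_add_staircase (n : ℕ) (α : Fin n → ℕ) :
    (Matrix.of fun i k : Fin n => hInt n (((α i + (n - 1 - (i : ℕ)) : ℕ) : ℤ) - (k : ℕ))).det =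
      ((Equiv.Perm.sign (Fin.revPerm (n := n)) : ℤ) : MvPolynomial (Fin n) ℤ) * schur n α := by
  have hrev : (Matrix.of fun i k : Fin n => hInt n (((α i + (n - 1 - (i : ℕ)) : ℕ) : ℤ) - (k : ℕ)))
      = (Matrix.of fun i j : Fin n => hInt n ((α i : ℤ) - (i : ℕ) + (j : ℕ))).submatrix id
          Fin.revPerm := by
    refine Matrix.ext fun i k => ?_
    simp only [Matrix.submatrix_apply, Matrix.of_apply, id_eq, Fin.revPerm_apply, Fin.val_rev]
    congr 1
    omega
  rw [hrev, Matrix.det_permute', schur]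

theorem schur_zero (n : ℕ) : schur n 0 = 1 := by
  rw [schur, Matrix.det_of_isUpperTriangular]
  · exact prod_eq_one fun i _ => by simpa using hInt_natCast n 0
  · intro i j (hji : (j : ℕ) < i)
    exact hInt_of_neg (by rw [Pi.zero_apply]; omega)

theorem schur_bialternant_general (n : ℕ) (α : Fin n → ℕ) :
    schur n α *
      Matrix.det (Matrix.of fun i j : Fin n =>
        (X j : MvPolynomial (Fin n) ℤ) ^ (n - 1 - (i : ℕ))) =
    Matrix.det (Matrix.of fun i j : Fin n =>
      (X j : MvPolynomial (Fin n) ℤ) ^ (α i + (n - 1 - (i : ℕ)))) := by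
  set B := (Matrix.of fun k j : Fin n => PowerSeries.coeff k (esymmEraseSeries (Fin n) ℤ j)).det
  have hvandermonde :
      ((Equiv.Perm.sign (Fin.revPerm (n := n)) : ℤ) : MvPolynomial (Fin n) ℤ) * B =
        Matrix.det (Matrix.of fun i j : Fin n =>
          (X j : MvPolynomial (Fin n) ℤ) ^ (n - 1 - (i : ℕ))) := by
    have h := det_hInt_mul_det_coeff_esymmEraseSeries n fun i => (0 : Fin n → ℕ) i + (n - 1 - i)
    rw [det_hInt_add_staircase, schur_zero, mul_one] at h
    simpa only [Pi.zero_apply, zero_add] using h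
  rw [← hvandermonde, mul_left_comm, ← mul_assoc, ← det_hInt_add_staircase]
  exact det_hInt_mul_det_coeff_esymmEraseSeries n fun i => α i + (n - 1 - (i : ℕ))

/-- The bialternant formula:
`s_α(x) · det(x_j^{n-i}) = det(x_j^{α_i + n - i})`. -/
theorem schur_bialternant (n : ℕ) (α : Fin n → ℕ) (hα : Antitone α) :
    schur n α *
      Matrix.det (Matrix.of fun i j : Fin n =>
        (X j : MvPolynomial (Fin n) ℤ) ^ (n - 1 - (i : ℕ))) =
    Matrix.det (Matrix.of fun i j : Fin n =>
      (X j : MvPolynomial (Fin n) ℤ) ^ (α i + (n - 1 - (i : ℕ)))) :=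
  schur_bialternant_general n α
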